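/- In a category C equipped with a pre-differential structure satisfying (Dproj-lin), (Dsum-lin), (D-chain) and (D-add): the monad laws hold for (D, ι₀, θ), i.e. θ ∘ D ι₀ = id_{D X}, θ ∘ ι₀ = id_{D X}, and θ_X ∘ D θ_X = θ_X ∘ θ_{D X} : D³X → D X; consequently (D, ι₀, θ) is a monad on C. -/
import Mathlib


open CategoryTheory CategoryTheory.Limits
open scoped Classical

universe v u

/-- A summable pairing structure on a category `C` whose hom-sets carry a
distinguished morphism `0` satisfying `0 ∘ f = 0`. -/
structure SummablePairing (C : Type u) [Category.{v} C] where
  /-- the distinguished zero morphism of each hom-set -/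
  zero : ∀ X Y : C, X ⟶ Y
  /-- `0 ∘ f = 0` -/
  comp_zero : ∀ {X Y Z : C} (f : X ⟶ Y), f ≫ zero Y Z = zero X Z
  /-- the map on objects -/
  D : C → C
  p0 : ∀ X : C, D X ⟶ X
  p1 : ∀ X : C, D X ⟶ X
  s : ∀ X : C, D X ⟶ X
  /-- `p0` and `p1` are jointly monic -/
  jointly_monic : ∀ {Y X : C} {f g : Y ⟶ D X},
    f ≫ p0 X = g ≫ p0 X → f ≫ p1 X = g ≫ p1 X → f = g

namespace SummablePairing

variable {C : Type u} [Category.{v} C]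

/-- `f0 ⊞ f1` : summability of two parallel morphisms. -/
def Summable (S : SummablePairing C) {X Y : C} (f0 f1 : X ⟶ Y) : Prop :=
  ∃ w : X ⟶ S.D Y, w ≫ S.p0 Y = f0 ∧ w ≫ S.p1 Y = f1

/-- the witness `⟨f0, f1⟩` of a summable pair (an arbitrary default otherwise) -/
noncomputable def wit (S : SummablePairing C) {X Y : C} (f0 f1 : X ⟶ Y) : X ⟶ S.D Y :=
  if h : S.Summable f0 f1 then h.choose else S.zero X (S.D Y)

/-- the sum `f0 + f1` of a summable pair -/
noncomputable def add (S : SummablePairing C) {X Y : C} (f0 f1 : X ⟶ Y) : X ⟶ Y :=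
  S.wit f0 f1 ≫ S.s Y

/-- additive morphisms -/
def Additive (S : SummablePairing C) {Y Z : C} (h : Y ⟶ Z) : Prop :=
  (∀ X : C, S.zero X Y ≫ h = S.zero X Z) ∧
  (∀ (X : C) (f0 f1 : X ⟶ Y), S.Summable f0 f1 →
    S.Summable (f0 ≫ h) (f1 ≫ h) ∧ S.add f0 f1 ≫ h = S.add (f0 ≫ h) (f1 ≫ h))

/-- a left pre-summability structure: `p0`, `p1` and `s` are additive -/
def IsLeftPreSummability (S : SummablePairing C) : Prop :=
  (∀ X : C, S.Additive (S.p0 X)) ∧ (∀ X : C, S.Additive (S.p1 X)) ∧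
  (∀ X : C, S.Additive (S.s X))

/-- axiom (D-com) -/
def Dcom (S : SummablePairing C) : Prop :=
  ∀ X : C, S.Summable (S.p1 X) (S.p0 X) ∧ S.add (S.p1 X) (S.p0 X) = S.s X

/-- axiom (D-zero) -/
def Dzero (S : SummablePairing C) : Prop :=
  ∀ X : C, S.Summable (𝟙 X) (S.zero X X) ∧ S.Summable (S.zero X X) (𝟙 X) ∧
    S.add (𝟙 X) (S.zero X X) = 𝟙 X ∧ S.add (S.zero X X) (𝟙 X) = 𝟙 X

/-- axiom (D-witness) -/
def Dwitness (S : SummablePairing C) : Prop :=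
  ∀ (Y X : C) (f g : Y ⟶ S.D X),
    S.Summable (f ≫ S.s X) (g ≫ S.s X) → S.Summable f g

/-- a left summability structure -/
def IsLeftSummability (S : SummablePairing C) : Prop :=
  S.IsLeftPreSummability ∧ S.Dcom ∧ S.Dzero ∧ S.Dwitness

/-- `ι₀ = ⟨id, 0⟩` -/
noncomputable def iota0 (S : SummablePairing C) (X : C) : X ⟶ S.D X :=
  S.wit (𝟙 X) (S.zero X X)

/-- `θ = ⟨π₀ ∘ π₀, π₁ ∘ π₀ + π₀ ∘ π₁⟩` -/
noncomputable def theta (S : SummablePairing C) (X : C) : S.D (S.D X) ⟶ S.D X :=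
  S.wit (S.p0 (S.D X) ≫ S.p0 X)
    (S.add (S.p0 (S.D X) ≫ S.p1 X) (S.p1 (S.D X) ≫ S.p0 X))

/-- `l = ⟨⟨π₀, 0⟩, ⟨0, π₁⟩⟩` -/
noncomputable def lmor (S : SummablePairing C) (X : C) : S.D X ⟶ S.D (S.D X) :=
  S.wit (S.wit (S.p0 X) (S.zero (S.D X) X)) (S.wit (S.zero (S.D X) X) (S.p1 X))

/-- `c = ⟨⟨π₀ ∘ π₀, π₀ ∘ π₁⟩, ⟨π₁ ∘ π₀, π₁ ∘ π₁⟩⟩` -/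
noncomputable def cmor (S : SummablePairing C) (X : C) : S.D (S.D X) ⟶ S.D (S.D X) :=
  S.wit (S.wit (S.p0 (S.D X) ≫ S.p0 X) (S.p1 (S.D X) ≫ S.p0 X))
        (S.wit (S.p0 (S.D X) ≫ S.p1 X) (S.p1 (S.D X) ≫ S.p1 X))

end SummablePairing

/-- summability of a finite family of morphisms (represented as a multiset),
together with its sum, defined inductively -/
inductive SummablePairing.MSummable {C : Type u} [Category.{v} C] (S : SummablePairing C) :
    ∀ {X Y : C}, Multiset (X ⟶ Y) → (X ⟶ Y) → Prop
  | nil {X Y : C} : SummablePairing.MSummable S (0 : Multiset (X ⟶ Y)) (S.zero X Y)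
  | cons {X Y : C} {m : Multiset (X ⟶ Y)} {t f : X ⟶ Y} :
      SummablePairing.MSummable S m t → S.Summable t f →
      SummablePairing.MSummable S (f ::ₘ m) (S.add t f)

/-- the data making a left summability structure a pre-differential structure:
an operator `D` on morphisms with `π₀ ∘ D f = f ∘ π₀` -/
structure DiffOp {C : Type u} [Category.{v} C] (S : SummablePairing C) where
  map : ∀ {X Y : C}, (X ⟶ Y) → (S.D X ⟶ S.D Y)
  map_p0 : ∀ {X Y : C} (f : X ⟶ Y), map f ≫ S.p0 Y = S.p0 X ≫ f

namespace DiffOp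

variable {C : Type u} [Category.{v} C] {S : SummablePairing C}

/-- the differential `∂f = π₁ ∘ D f` -/
def dd (Dm : DiffOp S) {X Y : C} (f : X ⟶ Y) : S.D X ⟶ Y := Dm.map f ≫ S.p1 Y

/-- D-linear morphisms -/
def DLinear (Dm : DiffOp S) {X Y : C} (f : X ⟶ Y) : Prop :=
  Dm.map f ≫ S.p1 Y = S.p1 X ≫ f ∧ Dm.map f ≫ S.s Y = S.s X ≫ f ∧
  (∀ U : C, S.zero U X ≫ f = S.zero U Y)

/-- axiom (Dproj-lin) -/
def DprojLin (Dm : DiffOp S) : Prop :=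
  (∀ X : C, Dm.DLinear (S.p0 X)) ∧ (∀ X : C, Dm.DLinear (S.p1 X))

/-- axiom (Dsum-lin) -/
def DsumLin (Dm : DiffOp S) : Prop :=
  (∀ X : C, Dm.DLinear (S.s X)) ∧ (∀ X Y : C, Dm.DLinear (S.zero X Y))

/-- axiom (D-chain): functoriality -/
def Dchain (Dm : DiffOp S) : Prop :=
  (∀ X : C, Dm.map (𝟙 X) = 𝟙 (S.D X)) ∧
  (∀ (X Y Z : C) (f : X ⟶ Y) (g : Y ⟶ Z), Dm.map (f ≫ g) = Dm.map f ≫ Dm.map g)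

/-- axiom (D-add): naturality of `ι₀` and `θ` -/
def Dadd (Dm : DiffOp S) : Prop :=
  (∀ (X Y : C) (f : X ⟶ Y), S.iota0 X ≫ Dm.map f = f ≫ S.iota0 Y) ∧
  (∀ (X Y : C) (f : X ⟶ Y), S.theta X ≫ Dm.map f = Dm.map (Dm.map f) ≫ S.theta Y)

/-- axiom (D-lin): naturality of `l` -/
def Dlin (Dm : DiffOp S) : Prop :=
  ∀ (X Y : C) (f : X ⟶ Y), Dm.map f ≫ S.lmor Y = S.lmor X ≫ Dm.map (Dm.map f)

/-- axiom (D-Schwarz): naturality of `c` -/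
def Dschwarz (Dm : DiffOp S) : Prop :=
  ∀ (X Y : C) (f : X ⟶ Y),
    S.cmor X ≫ Dm.map (Dm.map f) = Dm.map (Dm.map f) ≫ S.cmor Y

end DiffOp

namespace SummablePairing

variable {C : Type u} [Category.{v} C] (S : SummablePairing C)

theorem wit_p0 {X Y : C} {f0 f1 : X ⟶ Y} (h : S.Summable f0 f1) :
    S.wit f0 f1 ≫ S.p0 Y = f0 := by
  rw [wit, dif_pos h]; exact h.choose_spec.1

theorem wit_p1 {X Y : C} {f0 f1 : X ⟶ Y} (h : S.Summable f0 f1) :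
    S.wit f0 f1 ≫ S.p1 Y = f1 := by
  rw [wit, dif_pos h]; exact h.choose_spec.2

theorem wit_unique {X Y : C} {f0 f1 : X ⟶ Y} {w : X ⟶ S.D Y}
    (h0 : w ≫ S.p0 Y = f0) (h1 : w ≫ S.p1 Y = f1) : S.wit f0 f1 = w := by
  have hs : S.Summable f0 f1 := ⟨w, h0, h1⟩
  exact S.jointly_monic (by rw [S.wit_p0 hs, h0]) (by rw [S.wit_p1 hs, h1])

theorem add_eq {X Y : C} {f0 f1 : X ⟶ Y} {w : X ⟶ S.D Y}
    (h0 : w ≫ S.p0 Y = f0) (h1 : w ≫ S.p1 Y = f1) :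
    S.add f0 f1 = w ≫ S.s Y := by
  rw [add, S.wit_unique h0 h1]

theorem summable_precomp {W X Y : C} (g : W ⟶ X) {f0 f1 : X ⟶ Y}
    (h : S.Summable f0 f1) : S.Summable (g ≫ f0) (g ≫ f1) :=
  ⟨g ≫ S.wit f0 f1, by rw [Category.assoc, S.wit_p0 h],
    by rw [Category.assoc, S.wit_p1 h]⟩

theorem add_precomp {W X Y : C} (g : W ⟶ X) {f0 f1 : X ⟶ Y}
    (h : S.Summable f0 f1) :
    g ≫ S.add f0 f1 = S.add (g ≫ f0) (g ≫ f1) := by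
  rw [S.add_eq (w := g ≫ S.wit f0 f1)
      (by rw [Category.assoc, S.wit_p0 h]) (by rw [Category.assoc, S.wit_p1 h]),
    add, Category.assoc]

/-- `ι₁ = ⟨0, id⟩` -/
noncomputable def iota1 (X : C) : X ⟶ S.D X := S.wit (S.zero X X) (𝟙 X)

section WithHS

variable (hS : S.IsLeftSummability)

include hS

theorem iota0_p0 (X : C) : S.iota0 X ≫ S.p0 X = 𝟙 X :=
  S.wit_p0 (hS.2.2.1 X).1

theorem iota0_p1 (X : C) : S.iota0 X ≫ S.p1 X = S.zero X X :=
  S.wit_p1 (hS.2.2.1 X).1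

theorem iota0_s (X : C) : S.iota0 X ≫ S.s X = 𝟙 X :=
  (hS.2.2.1 X).2.2.1

theorem iota1_p0 (X : C) : S.iota1 X ≫ S.p0 X = S.zero X X :=
  S.wit_p0 (hS.2.2.1 X).2.1

theorem iota1_p1 (X : C) : S.iota1 X ≫ S.p1 X = 𝟙 X :=
  S.wit_p1 (hS.2.2.1 X).2.1

theorem iota1_s (X : C) : S.iota1 X ≫ S.s X = 𝟙 X :=
  (hS.2.2.1 X).2.2.2

theorem summable_zero_right {X Y : C} (f : X ⟶ Y) : S.Summable f (S.zero X Y) :=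
  ⟨f ≫ S.iota0 Y, by rw [Category.assoc, S.iota0_p0 hS, Category.comp_id],
    by rw [Category.assoc, S.iota0_p1 hS, S.comp_zero]⟩

theorem add_zero_right {X Y : C} (f : X ⟶ Y) : S.add f (S.zero X Y) = f := by
  rw [S.add_eq (w := f ≫ S.iota0 Y)
      (by rw [Category.assoc, S.iota0_p0 hS, Category.comp_id])
      (by rw [Category.assoc, S.iota0_p1 hS, S.comp_zero]),
    Category.assoc, S.iota0_s hS, Category.comp_id]

theorem summable_zero_left {X Y : C} (f : X ⟶ Y) : S.Summable (S.zero X Y) f :=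
  ⟨f ≫ S.iota1 Y, by rw [Category.assoc, S.iota1_p0 hS, S.comp_zero],
    by rw [Category.assoc, S.iota1_p1 hS, Category.comp_id]⟩

theorem add_zero_left {X Y : C} (f : X ⟶ Y) : S.add (S.zero X Y) f = f := by
  rw [S.add_eq (w := f ≫ S.iota1 Y)
      (by rw [Category.assoc, S.iota1_p0 hS, S.comp_zero])
      (by rw [Category.assoc, S.iota1_p1 hS, Category.comp_id]),
    Category.assoc, S.iota1_s hS, Category.comp_id]

theorem summable_symm {X Y : C} {f g : X ⟶ Y} (h : S.Summable f g) :
    S.Summable g f := by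
  obtain ⟨w, h0, h1⟩ := h
  refine ⟨w ≫ S.wit (S.p1 Y) (S.p0 Y), ?_, ?_⟩
  · rw [Category.assoc, S.wit_p0 (hS.2.1 Y).1, h1]
  · rw [Category.assoc, S.wit_p1 (hS.2.1 Y).1, h0]

theorem add_assoc' {A B : C} {x y z : A ⟶ B} (hxy : S.Summable x y)
    (hz : S.Summable (S.add x y) z) :
    S.Summable y z ∧ S.Summable x (S.add y z) ∧
      S.add (S.add x y) z = S.add x (S.add y z) := by
  set w := S.wit x y with hw
  set z' := z ≫ S.iota1 B with hz'
  have hws : w ≫ S.s B = S.add x y := rfl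
  have hz's : z' ≫ S.s B = z := by
    rw [hz', Category.assoc, S.iota1_s hS, Category.comp_id]
  have hwz' : S.Summable w z' := hS.2.2.2 A B w z' (by rw [hws, hz's]; exact hz)
  have hw0 : w ≫ S.p0 B = x := S.wit_p0 hxy
  have hw1 : w ≫ S.p1 B = y := S.wit_p1 hxy
  have hz'0 : z' ≫ S.p0 B = S.zero A B := by
    rw [hz', Category.assoc, S.iota1_p0 hS, S.comp_zero]
  have hz'1 : z' ≫ S.p1 B = z := by
    rw [hz', Category.assoc, S.iota1_p1 hS, Category.comp_id]
  have hp0 := (hS.1.1 B).2 A w z' hwz'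
  have hp1 := (hS.1.2.1 B).2 A w z' hwz'
  have hyz : S.Summable y z := by rw [hw1, hz'1] at hp1; exact hp1.1
  have hV0 : S.add w z' ≫ S.p0 B = x := by
    rw [hp0.2, hw0, hz'0, S.add_zero_right hS]
  have hV1 : S.add w z' ≫ S.p1 B = S.add y z := by rw [hp1.2, hw1, hz'1]
  refine ⟨hyz, ⟨S.add w z', hV0, hV1⟩, ?_⟩
  rw [S.add_eq hV0 hV1, ((hS.1.2.2 B).2 A w z' hwz').2, hws, hz's]

theorem theta_spec (X : C) :
    S.Summable (S.p0 (S.D X) ≫ S.p1 X) (S.p1 (S.D X) ≫ S.p0 X) ∧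
    S.Summable (S.p0 (S.D X) ≫ S.p0 X)
      (S.add (S.p0 (S.D X) ≫ S.p1 X) (S.p1 (S.D X) ≫ S.p0 X)) ∧
    S.theta X ≫ S.p0 X = S.p0 (S.D X) ≫ S.p0 X ∧
    S.theta X ≫ S.p1 X =
      S.add (S.p0 (S.D X) ≫ S.p1 X) (S.p1 (S.D X) ≫ S.p0 X) := by
  set a := S.p0 (S.D X) ≫ S.p0 X with ha
  set b := S.p0 (S.D X) ≫ S.p1 X with hb
  set c := S.p1 (S.D X) ≫ S.p0 X with hc
  set d := S.p1 (S.D X) ≫ S.p1 X with hd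
  have hab : S.Summable a b := ⟨S.p0 (S.D X), rfl, rfl⟩
  have hcd : S.Summable c d := ⟨S.p1 (S.D X), rfl, rfl⟩
  have hab_s : S.add a b = S.p0 (S.D X) ≫ S.s X := S.add_eq rfl rfl
  have hcd_s : S.add c d = S.p1 (S.D X) ≫ S.s X := S.add_eq rfl rfl
  -- (a+b) ⊞ (c+d)
  have h01 : S.Summable (S.p0 (S.D X)) (S.p1 (S.D X)) :=
    S.summable_symm hS (hS.2.1 (S.D X)).1
  have habcd : S.Summable (S.add a b) (S.add c d) := by
    rw [hab_s, hcd_s]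
    exact ((hS.1.2.2 X).2 _ _ _ h01).1
  -- two assoc steps to get (a+b) ⊞ c
  have step1 := S.add_assoc' hS hcd (S.summable_symm hS habcd)
  have step2 := S.add_assoc' hS step1.1 (S.summable_symm hS step1.2.1)
  have habc : S.Summable (S.add a b) c := step2.1
  -- the witness of (a, b+c)
  set u := S.p0 (S.D X) with hu
  set v := (S.p1 (S.D X) ≫ S.p0 X) ≫ S.iota1 X with hv
  have hv0 : v ≫ S.p0 X = S.zero (S.D (S.D X)) X := by
    rw [hv, Category.assoc, S.iota1_p0 hS, S.comp_zero]
  have hv1 : v ≫ S.p1 X = c := by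
    rw [hv, Category.assoc, S.iota1_p1 hS, Category.comp_id]
  have hvs : v ≫ S.s X = c := by
    rw [hv, Category.assoc, S.iota1_s hS, Category.comp_id]
  have huv : S.Summable u v := by
    refine hS.2.2.2 _ _ u v ?_
    rw [hvs]
    have : u ≫ S.s X = S.add a b := hab_s.symm
    rw [this]; exact habc
  have hu0 : u ≫ S.p0 X = a := rfl
  have hu1 : u ≫ S.p1 X = b := rfl
  have hq0 := (hS.1.1 X).2 _ u v huv
  have hq1 := (hS.1.2.1 X).2 _ u v huv
  have hbc : S.Summable b c := by rw [hu1, hv1] at hq1; exact hq1.1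
  have hV0 : S.add u v ≫ S.p0 X = a := by
    rw [hq0.2, hu0, hv0, S.add_zero_right hS]
  have hV1 : S.add u v ≫ S.p1 X = S.add b c := by rw [hq1.2, hu1, hv1]
  have habc' : S.Summable a (S.add b c) := ⟨S.add u v, hV0, hV1⟩
  refine ⟨hbc, habc', ?_, ?_⟩
  · show S.wit a (S.add b c) ≫ S.p0 X = a
    exact S.wit_p0 habc'
  · show S.wit a (S.add b c) ≫ S.p1 X = S.add b c
    exact S.wit_p1 habc'

end WithHS

end SummablePairing

/-- under (Dproj-lin), (Dsum-lin), (D-chain) and (D-add), the monad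
laws hold for `(D, ι₀, θ)`, so that it is a monad. -/
theorem stmt12 {C : Type u} [Category.{v} C] (S : SummablePairing C)
    (hS : S.IsLeftSummability) (Dm : DiffOp S)
    (hproj : Dm.DprojLin) (hsum : Dm.DsumLin) (hchain : Dm.Dchain) (hadd : Dm.Dadd)
    (X : C) :
    Dm.map (S.iota0 X) ≫ S.theta X = 𝟙 (S.D X) ∧
    S.iota0 (S.D X) ≫ S.theta X = 𝟙 (S.D X) ∧
    Dm.map (S.theta X) ≫ S.theta X = S.theta (S.D X) ≫ S.theta X := by
  obtain ⟨hbc, habc, ht0, ht1⟩ := S.theta_spec hS X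
  obtain ⟨hbc', habc', ht0', ht1'⟩ := S.theta_spec hS (S.D X)
  refine ⟨?_, ?_, ?_⟩
  · -- D ι₀ ≫ θ = id
    apply S.jointly_monic
    · rw [Category.assoc, ht0, ← Category.assoc, Dm.map_p0, Category.assoc,
        S.iota0_p0 hS, Category.comp_id, Category.id_comp]
    · have e1 : Dm.map (S.iota0 X) ≫ S.p0 (S.D X) ≫ S.p1 X = S.zero (S.D X) X := by
        rw [← Category.assoc, Dm.map_p0, Category.assoc, S.iota0_p1 hS, S.comp_zero]
      have e2 : Dm.map (S.iota0 X) ≫ S.p1 (S.D X) ≫ S.p0 X = S.p1 X := by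
        rw [← (hproj.1 X).1, ← Category.assoc, ← hchain.2 _ _ _ (S.iota0 X) (S.p0 X),
          S.iota0_p0 hS, hchain.1, Category.id_comp]
      rw [Category.assoc, ht1, S.add_precomp _ hbc, e1, e2, S.add_zero_left hS,
        Category.id_comp]
  · -- ι₀ ≫ θ = id
    apply S.jointly_monic
    · rw [Category.assoc, ht0, ← Category.assoc, S.iota0_p0 hS, Category.id_comp]
    · have e3 : S.iota0 (S.D X) ≫ S.p0 (S.D X) ≫ S.p1 X = S.p1 X := by
        rw [← Category.assoc, S.iota0_p0 hS, Category.id_comp]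
      have e4 : S.iota0 (S.D X) ≫ S.p1 (S.D X) ≫ S.p0 X = S.zero (S.D X) X := by
        rw [← Category.assoc, S.iota0_p1 hS, (hS.1.1 X).1 (S.D X)]
      rw [Category.assoc, ht1, S.add_precomp _ hbc, e3, e4, S.add_zero_right hS,
        Category.id_comp]
  · -- D θ ≫ θ = θ ≫ θ
    apply S.jointly_monic
    · have L0 : (Dm.map (S.theta X) ≫ S.theta X) ≫ S.p0 X
          = S.p0 (S.D (S.D X)) ≫ S.p0 (S.D X) ≫ S.p0 X := by
        rw [Category.assoc, ht0, ← Category.assoc, Dm.map_p0, Category.assoc, ht0]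
      have R0 : (S.theta (S.D X) ≫ S.theta X) ≫ S.p0 X
          = S.p0 (S.D (S.D X)) ≫ S.p0 (S.D X) ≫ S.p0 X := by
        rw [Category.assoc, ht0, ← Category.assoc, ht0', Category.assoc]
      rw [L0, R0]
    · have hxy := S.summable_precomp (S.p0 (S.D (S.D X))) hbc
      have hLb : Dm.map (S.theta X) ≫ S.p0 (S.D X) ≫ S.p1 X
          = S.add (S.p0 (S.D (S.D X)) ≫ S.p0 (S.D X) ≫ S.p1 X)
              (S.p0 (S.D (S.D X)) ≫ S.p1 (S.D X) ≫ S.p0 X) := by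
        rw [← Category.assoc, Dm.map_p0, Category.assoc, ht1, S.add_precomp _ hbc]
      have hLc : Dm.map (S.theta X) ≫ S.p1 (S.D X) ≫ S.p0 X
          = S.p1 (S.D (S.D X)) ≫ S.p0 (S.D X) ≫ S.p0 X := by
        rw [← (hproj.1 X).1, ← Category.assoc, ← hchain.2 _ _ _ (S.theta X) (S.p0 X),
          ht0, hchain.2, Category.assoc, (hproj.1 X).1, ← Category.assoc,
          (hproj.1 (S.D X)).1, Category.assoc]
      have hz_summ : S.Summable
          (S.add (S.p0 (S.D (S.D X)) ≫ S.p0 (S.D X) ≫ S.p1 X)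
            (S.p0 (S.D (S.D X)) ≫ S.p1 (S.D X) ≫ S.p0 X))
          (S.p1 (S.D (S.D X)) ≫ S.p0 (S.D X) ≫ S.p0 X) := by
        have h := S.summable_precomp (Dm.map (S.theta X)) hbc
        rwa [hLb, hLc] at h
      have hL : (Dm.map (S.theta X) ≫ S.theta X) ≫ S.p1 X
          = S.add (S.add (S.p0 (S.D (S.D X)) ≫ S.p0 (S.D X) ≫ S.p1 X)
              (S.p0 (S.D (S.D X)) ≫ S.p1 (S.D X) ≫ S.p0 X))
              (S.p1 (S.D (S.D X)) ≫ S.p0 (S.D X) ≫ S.p0 X) := by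
        rw [Category.assoc, ht1, S.add_precomp _ hbc, hLb, hLc]
      have hRb : S.theta (S.D X) ≫ S.p0 (S.D X) ≫ S.p1 X
          = S.p0 (S.D (S.D X)) ≫ S.p0 (S.D X) ≫ S.p1 X := by
        rw [← Category.assoc, ht0', Category.assoc]
      have hRc : S.theta (S.D X) ≫ S.p1 (S.D X) ≫ S.p0 X
          = S.add (S.p0 (S.D (S.D X)) ≫ S.p1 (S.D X) ≫ S.p0 X)
              (S.p1 (S.D (S.D X)) ≫ S.p0 (S.D X) ≫ S.p0 X) := by
        rw [← Category.assoc, ht1', ((hS.1.1 X).2 _ _ _ hbc').2]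
        simp only [Category.assoc]
      have hR : (S.theta (S.D X) ≫ S.theta X) ≫ S.p1 X
          = S.add (S.p0 (S.D (S.D X)) ≫ S.p0 (S.D X) ≫ S.p1 X)
              (S.add (S.p0 (S.D (S.D X)) ≫ S.p1 (S.D X) ≫ S.p0 X)
                (S.p1 (S.D (S.D X)) ≫ S.p0 (S.D X) ≫ S.p0 X)) := by
        rw [Category.assoc, ht1, S.add_precomp _ hbc, hRb, hRc]
      rw [hL, hR]
      exact (S.add_assoc' hS hxy hz_summ).2.2
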